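/- arXiv:2301.11615 — 3 statements merged into one kernel-verified Lean document; each statement's English description precedes it below -/
import Mathlib

section
/- Let G be a subcubic graph that cannot be decomposed into a linear forest and a matching, and suppose G is vertex-minimal (and edge-minimal) with this property. Then G has no vertex of degree 1. -/
/-- A linear forest: an acyclic graph in which every vertex has degree at most 2,
i.e. a disjoint union of paths. -/
def SimpleGraph.IsLinearForest {V : Type*} (H : SimpleGraph V) : Prop :=
  H.IsAcyclic ∧ ∀ v : V, (H.neighborSet v).ncard ≤ 2

/-- `G` decomposes into a linear forest and a matching: its edge set is
partitioned into the edge set of a linear forest and the edge set of a matching. -/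
def SimpleGraph.HasLFMatchingDecomp {V : Type*} (G : SimpleGraph V) : Prop :=
  ∃ F M : SimpleGraph V, F ⊔ M = G ∧ (∀ u v : V, ¬ (F.Adj u v ∧ M.Adj u v)) ∧
    F.IsLinearForest ∧ ∀ v : V, (M.neighborSet v).ncard ≤ 1

private lemma aux_not_mem_support {V : Type*} {H : SimpleGraph V} {v u : V}
    (hv : H.neighborSet v ⊆ {u}) {a : V} {c : H.Walk a a} (hc : c.IsCycle) :
    v ∉ c.support := by
  classical
  intro hmem
  have hrot : (c.rotate v hmem).IsCycle := hc.rotate hmem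
  obtain ⟨w, hadj, q, heq⟩ := SimpleGraph.Walk.not_nil_iff.mp hrot.not_nil
  rw [heq] at hrot
  rw [SimpleGraph.Walk.cons_isCycle_iff] at hrot
  obtain ⟨hqpath, hqe⟩ := hrot
  have hwu : w = u := hv hadj
  have hvw : v ≠ w := hadj.ne
  have hnn : ¬ q.reverse.Nil := by
    intro hn
    exact hvw hn.eq
  obtain ⟨x, hx, q', heq'⟩ := SimpleGraph.Walk.not_nil_iff.mp hnn
  have hxu : x = u := hv hx
  have : s(v, x) ∈ q.reverse.edges := by rw [heq']; exact List.mem_cons_self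
  rw [SimpleGraph.Walk.edges_reverse, List.mem_reverse] at this
  rw [hxu, ← hwu] at this
  exact hqe this

private lemma nbr_sup {V : Type*} (A B : SimpleGraph V) (x : V) :
    (A ⊔ B).neighborSet x = A.neighborSet x ∪ B.neighborSet x := rfl

/-- a minimal (w.r.t. number of vertices plus edges) subcubic graph
that does not decompose into a linear forest and a matching has no vertex of
degree 1. -/
theorem stmt5 {V : Type*} [Fintype V] (G : SimpleGraph V)
    (hsub : ∀ v : V, (G.neighborSet v).ncard ≤ 3)
    (hno : ¬ G.HasLFMatchingDecomp)
    (hmin : ∀ (n : ℕ) (H : SimpleGraph (Fin n)),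
      n + H.edgeSet.ncard < Fintype.card V + G.edgeSet.ncard →
      (∀ v, (H.neighborSet v).ncard ≤ 3) → H.HasLFMatchingDecomp) :
    ∀ v : V, (G.neighborSet v).ncard ≠ 1 := by
  classical
  intro v hdeg
  obtain ⟨u, hu⟩ := Set.ncard_eq_one.mp hdeg
  have huv : G.Adj v u := by
    have : u ∈ G.neighborSet v := by rw [hu]; exact rfl
    exact this
  have hvu : v ≠ u := huv.ne
  -- the graph with edge uv removed
  set G' := G.deleteEdges {s(u, v)} with hG'def
  have hG'adj : ∀ a b : V, G'.Adj a b ↔ G.Adj a b ∧ s(a, b) ≠ s(u, v) := by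
    intro a b
    rw [hG'def, SimpleGraph.deleteEdges_adj]
    simp
  have hG'v : G'.neighborSet v = ∅ := by
    ext b
    simp only [SimpleGraph.mem_neighborSet, Set.mem_empty_iff_false, iff_false]
    intro hb
    rw [hG'adj] at hb
    have hbv : b ∈ G.neighborSet v := hb.1
    rw [hu, Set.mem_singleton_iff] at hbv
    subst hbv
    exact hb.2 Sym2.eq_swap
  have hG'u : G'.neighborSet u = G.neighborSet u \ {v} := by
    ext b
    simp only [SimpleGraph.mem_neighborSet, Set.mem_diff, Set.mem_singleton_iff]
    rw [hG'adj]
    constructor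
    · rintro ⟨h1, h2⟩
      exact ⟨h1, fun hbv => h2 (by rw [hbv])⟩
    · rintro ⟨h1, h2⟩
      exact ⟨h1, fun hh => h2 (Sym2.congr_right.mp hh)⟩
  have hG'ucard : (G'.neighborSet u).ncard ≤ 2 := by
    rw [hG'u]
    have h3 := hsub u
    have hvmem : v ∈ G.neighborSet u := huv.symm
    have := Set.ncard_diff_singleton_add_one hvmem (Set.toFinite _)
    omega
  have hG'le : G' ≤ G := SimpleGraph.deleteEdges_le _
  have hecard : G'.edgeSet.ncard < G.edgeSet.ncard := by
    rw [hG'def, SimpleGraph.edgeSet_deleteEdges]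
    exact Set.ncard_diff_singleton_lt_of_mem huv.symm (Set.toFinite _)
  -- transport to `Fin n`
  set n := Fintype.card V with hn
  let e : V ≃ Fin n := Fintype.equivFin V
  set H : SimpleGraph (Fin n) := G'.comap ⇑e.symm with hHdef
  let φ : H ≃g G' := SimpleGraph.Iso.comap e.symm G'
  have hHdeg : ∀ a : Fin n, (H.neighborSet a).ncard ≤ 3 := by
    intro a
    have : (H.neighborSet a).ncard = (G'.neighborSet (φ a)).ncard := by
      rw [← Nat.card_coe_set_eq, ← Nat.card_coe_set_eq]
      exact Nat.card_congr (φ.mapNeighborSet a)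
    rw [this]
    calc (G'.neighborSet (φ a)).ncard ≤ (G.neighborSet (φ a)).ncard :=
          Set.ncard_le_ncard (fun x hx => hG'le hx) (Set.toFinite _)
      _ ≤ 3 := hsub _
  have hHedge : H.edgeSet.ncard = G'.edgeSet.ncard := by
    rw [← Nat.card_coe_set_eq, ← Nat.card_coe_set_eq]
    exact Nat.card_congr φ.mapEdgeSet
  have hHsmall : n + H.edgeSet.ncard < Fintype.card V + G.edgeSet.ncard := by
    rw [hHedge]; omega
  obtain ⟨F, M, hsup, hdisj, ⟨hFacyc, hFdeg⟩, hMdeg⟩ := hmin n H hHsmall hHdeg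
  -- pull the decomposition back to `V`
  set F' : SimpleGraph V := F.comap ⇑e with hF'def
  set M' : SimpleGraph V := M.comap ⇑e with hM'def
  have hF'adj : ∀ a b : V, F'.Adj a b ↔ F.Adj (e a) (e b) := fun _ _ => Iff.rfl
  have hM'adj : ∀ a b : V, M'.Adj a b ↔ M.Adj (e a) (e b) := fun _ _ => Iff.rfl
  have hsup' : F' ⊔ M' = G' := by
    ext a b
    have h1 : (F ⊔ M).Adj (e a) (e b) ↔ H.Adj (e a) (e b) := by rw [hsup]
    have h2 : H.Adj (e a) (e b) ↔ G'.Adj a b := by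
      rw [hHdef]
      simp [SimpleGraph.comap_adj]
    simp only [SimpleGraph.sup_adj] at h1 ⊢
    rw [hF'adj, hM'adj, ← h2, ← h1]
  have hdisj' : ∀ a b : V, ¬ (F'.Adj a b ∧ M'.Adj a b) := by
    intro a b hab
    exact hdisj (e a) (e b) ⟨hab.1, hab.2⟩
  have hF'le : F' ≤ G' := by rw [← hsup']; exact le_sup_left
  have hM'le : M' ≤ G' := by rw [← hsup']; exact le_sup_right
  have hF'acyc : F'.IsAcyclic := by
    intro x c hc
    have hinj : Function.Injective (⇑e) := e.injective
    let ψ : F' →g F := ⟨⇑e, fun h => h⟩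
    exact hFacyc ((c.map ψ)) (hc.map hinj)
  have hncardeq : ∀ (A : SimpleGraph (Fin n)) (x : V),
      ((A.comap ⇑e).neighborSet x).ncard = (A.neighborSet (e x)).ncard := by
    intro A x
    have hset : (A.comap ⇑e).neighborSet x = ⇑e ⁻¹' (A.neighborSet (e x)) := rfl
    rw [hset, ← Equiv.image_symm_eq_preimage, Set.ncard_image_of_injective _ e.symm.injective]
  have hF'deg : ∀ x : V, (F'.neighborSet x).ncard ≤ 2 := fun x => (hncardeq F x) ▸ hFdeg (e x)
  have hM'deg : ∀ x : V, (M'.neighborSet x).ncard ≤ 1 := fun x => (hncardeq M x) ▸ hMdeg (e x)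
  -- neighbor sets at v are empty
  have hF'v : F'.neighborSet v = ∅ := by
    rw [← Set.subset_empty_iff, ← hG'v]
    exact fun x hx => hF'le hx
  have hM'v : M'.neighborSet v = ∅ := by
    rw [← Set.subset_empty_iff, ← hG'v]
    exact fun x hx => hM'le hx
  -- neighbor sets at u split
  have hsplitu : F'.neighborSet u ∪ M'.neighborSet u = G'.neighborSet u := by
    ext b
    simp only [Set.mem_union, SimpleGraph.mem_neighborSet]
    rw [← hsup']
    rfl
  have hdisju : Disjoint (F'.neighborSet u) (M'.neighborSet u) := by
    rw [Set.disjoint_left]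
    intro b hb1 hb2
    exact hdisj' u b ⟨hb1, hb2⟩
  have hsumu : (F'.neighborSet u).ncard + (M'.neighborSet u).ncard ≤ 2 := by
    rw [← Set.ncard_union_eq hdisju (Set.toFinite _) (Set.toFinite _), hsplitu]
    exact hG'ucard
  -- the single-edge graph uv
  set euv : SimpleGraph V := SimpleGraph.fromEdgeSet {s(u, v)} with heuvdef
  have heuvadj : ∀ a b : V, euv.Adj a b ↔ (a = u ∧ b = v) ∨ (a = v ∧ b = u) := by
    intro a b
    rw [heuvdef, SimpleGraph.fromEdgeSet_adj, Set.mem_singleton_iff, Sym2.eq_iff]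
    constructor
    · rintro ⟨h1 | h2, hne⟩
      · exact Or.inl h1
      · exact Or.inr h2
    · rintro (⟨ha, hb⟩ | ⟨ha, hb⟩)
      · refine ⟨Or.inl ⟨ha, hb⟩, ?_⟩
        rw [ha, hb]; exact fun h => hvu h.symm
      · refine ⟨Or.inr ⟨ha, hb⟩, ?_⟩
        rw [ha, hb]; exact hvu
  have heuvnbr_u : euv.neighborSet u = {v} := by
    ext b
    rw [SimpleGraph.mem_neighborSet, heuvadj, Set.mem_singleton_iff]
    constructor
    · rintro (⟨-, hb⟩ | ⟨huu, -⟩)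
      · exact hb
      · exact absurd huu.symm hvu
    · intro hb; exact Or.inl ⟨rfl, hb⟩
  have heuvnbr_v : euv.neighborSet v = {u} := by
    ext b
    rw [SimpleGraph.mem_neighborSet, heuvadj, Set.mem_singleton_iff]
    constructor
    · rintro (⟨hvv, -⟩ | ⟨-, hb⟩)
      · exact absurd hvv hvu
      · exact hb
    · intro hb; exact Or.inr ⟨rfl, hb⟩
  have heuvnbr_other : ∀ x : V, x ≠ u → x ≠ v → euv.neighborSet x = ∅ := by
    intro x hxu hxv
    ext b
    rw [SimpleGraph.mem_neighborSet, heuvadj]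
    simp only [Set.mem_empty_iff_false, iff_false]
    rintro (⟨h, -⟩ | ⟨h, -⟩)
    · exact hxu h
    · exact hxv h
  have hGsplit : G' ⊔ euv = G := by
    ext a b
    simp only [SimpleGraph.sup_adj]
    rw [hG'adj, heuvadj]
    constructor
    · rintro (⟨h, -⟩ | (⟨ha, hb⟩ | ⟨ha, hb⟩))
      · exact h
      · rw [ha, hb]; exact huv.symm
      · rw [ha, hb]; exact huv
    · intro h
      by_cases hcase : s(a, b) = s(u, v)
      · rw [Sym2.eq_iff] at hcase
        rcases hcase with ⟨ha, hb⟩ | ⟨ha, hb⟩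
        · exact Or.inr (Or.inl ⟨ha, hb⟩)
        · exact Or.inr (Or.inr ⟨ha, hb⟩)
      · exact Or.inl ⟨h, hcase⟩
  have heuv_not_M' : ∀ a b : V, euv.Adj a b → ¬ M'.Adj a b := by
    intro a b hab hM
    rw [heuvadj] at hab
    rcases hab with ⟨ha, hb⟩ | ⟨ha, hb⟩
    · rw [ha, hb] at hM
      have hm : u ∈ M'.neighborSet v := hM.symm
      rw [hM'v] at hm; exact hm
    · rw [ha, hb] at hM
      have hm : u ∈ M'.neighborSet v := hM
      rw [hM'v] at hm; exact hm
  have heuv_not_F' : ∀ a b : V, euv.Adj a b → ¬ F'.Adj a b := by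
    intro a b hab hF
    rw [heuvadj] at hab
    rcases hab with ⟨ha, hb⟩ | ⟨ha, hb⟩
    · rw [ha, hb] at hF
      have hm : u ∈ F'.neighborSet v := hF.symm
      rw [hF'v] at hm; exact hm
    · rw [ha, hb] at hF
      have hm : u ∈ F'.neighborSet v := hF
      rw [hF'v] at hm; exact hm
  -- case split on the degree of u in F'
  apply hno
  by_cases hcase : (F'.neighborSet u).ncard ≤ 1
  · -- add uv to the linear forest
    refine ⟨F' ⊔ euv, M', ?_, ?_, ⟨?_, ?_⟩, ?_⟩
    · rw [sup_right_comm, hsup', hGsplit]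
    · intro a b hab
      obtain ⟨hab1, hab2⟩ := hab
      rw [SimpleGraph.sup_adj] at hab1
      rcases hab1 with hab1 | hab1
      · exact hdisj' a b ⟨hab1, hab2⟩
      · exact heuv_not_M' a b hab1 hab2
    · -- acyclic
      intro x c hc
      have hnbrv : (F' ⊔ euv).neighborSet v ⊆ {u} := by
        intro b hb
        rw [nbr_sup, Set.mem_union, hF'v, heuvnbr_v] at hb
        rcases hb with hb | hb
        · exact absurd hb (Set.notMem_empty b)
        · exact hb
      have hvnot : v ∉ c.support := aux_not_mem_support hnbrv hc
      have hedges : ∀ e' ∈ c.edges, e' ∈ F'.edgeSet := by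
        intro e' he'
        have he'mem : e' ∈ (F' ⊔ euv).edgeSet := c.edges_subset_edgeSet he'
        induction e' with
        | h a b =>
          rw [SimpleGraph.mem_edgeSet, SimpleGraph.sup_adj] at he'mem
          rw [SimpleGraph.mem_edgeSet]
          rcases he'mem with h | h
          · exact h
          · exfalso
            rw [heuvadj] at h
            rcases h with ⟨ha, hb⟩ | ⟨ha, hb⟩
            · rw [hb] at he'
              exact hvnot (SimpleGraph.Walk.snd_mem_support_of_mem_edges c he')
            · rw [ha] at he'
              exact hvnot (SimpleGraph.Walk.fst_mem_support_of_mem_edges c he')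
      exact hF'acyc (c.transfer F' hedges) (hc.transfer hedges)
    · -- degrees ≤ 2
      intro x
      by_cases hxv : x = v
      · rw [hxv]
        have : (F' ⊔ euv).neighborSet v = {u} := by
          rw [nbr_sup, hF'v, heuvnbr_v, Set.empty_union]
        rw [this]
        simp
      · by_cases hxu : x = u
        · rw [hxu]
          rw [nbr_sup, heuvnbr_u]
          calc (F'.neighborSet u ∪ {v}).ncard ≤ (F'.neighborSet u).ncard + ({v} : Set V).ncard :=
                Set.ncard_union_le _ _
            _ ≤ 1 + 1 := by
                have h1 : ({v} : Set V).ncard = 1 := Set.ncard_singleton v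
                omega
            _ = 2 := rfl
        · rw [nbr_sup, heuvnbr_other x hxu hxv, Set.union_empty]
          exact hF'deg x
    · exact hM'deg
  · -- deg_F' u = 2, so u is unmatched in M'; add uv to the matching
    have hM'u : M'.neighborSet u = ∅ := by
      rw [← Set.ncard_eq_zero (Set.toFinite _)]
      omega
    refine ⟨F', M' ⊔ euv, ?_, ?_, ⟨hF'acyc, hF'deg⟩, ?_⟩
    · rw [← sup_assoc, hsup', hGsplit]
    · intro a b hab
      obtain ⟨hab1, hab2⟩ := hab
      rw [SimpleGraph.sup_adj] at hab2
      rcases hab2 with hab2 | hab2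
      · exact hdisj' a b ⟨hab1, hab2⟩
      · exact heuv_not_F' a b hab2 hab1
    · intro x
      by_cases hxv : x = v
      · rw [hxv]
        rw [nbr_sup, hM'v, heuvnbr_v, Set.empty_union]
        simp
      · by_cases hxu : x = u
        · rw [hxu]
          rw [nbr_sup, hM'u, heuvnbr_u, Set.empty_union]
          simp
        · rw [nbr_sup, heuvnbr_other x hxu hxv, Set.union_empty]
          exact hM'deg x
end

section
/- Let k > ℓ ≥ 2 be integers. Consider the 'short (k,ℓ)-forcer' graph G: a path v0 v1 … vk in which the edge v_i v_{i+1} is doubled for every i in {0,…,k−1} except those i of the form i = k−1−μ(ℓ+1) for some integer μ ≥ 0. Then in every decomposition (F_k, F_ℓ) of E(G) into a k-bounded linear forest F_k and an ℓ-bounded linear forest F_ℓ, one edge of each parallel pair lies in F_k and the other in F_ℓ, all the non-doubled edges v_iv_{i+1} with i = k−1−μ(ℓ+1) lie in F_k, the tip vertex v_k is incident to no edge of F_ℓ, and v_k is an endpoint of a path of length k in F_k; moreover such a decomposition exists. -/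
/-- A multigraph on vertex type `V` with edge index type `E`: each edge has an
unordered pair of endpoints. -/
structure Multigraph (V : Type*) (E : Type*) where
  ends : E → Sym2 V

namespace Multigraph

variable {V E : Type*} (M : Multigraph V E)

/-- The degree of `v` in the edge subset `S`. -/
noncomputable def mdeg (S : Set E) (v : V) : ℕ :=
  {e ∈ S | v ∈ M.ends e}.ncard

/-- A path of length `n` whose edges all lie in `S`: pairwise distinct vertices
`w 0, …, w n` and pairwise distinct edges `e 0, …, e (n-1)` of `S`, the `i`-th
edge joining `w i` and `w (i+1)`. -/
structure IsPathIn (S : Set E) (n : ℕ) (w : Fin (n + 1) → V) (e : Fin n → E) : Prop where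
  winj : Function.Injective w
  einj : Function.Injective e
  mem : ∀ i, e i ∈ S
  ends_eq : ∀ i : Fin n, M.ends (e i) = s(w i.castSucc, w i.succ)

/-- A cycle of length `n ≥ 1` whose edges all lie in `S` (a cycle of length 2
is a pair of parallel edges, a cycle of length 1 is a loop). -/
structure IsCycleIn (S : Set E) (n : ℕ) (w : Fin n → V) (e : Fin n → E) : Prop where
  pos : 0 < n
  winj : Function.Injective w
  einj : Function.Injective e
  mem : ∀ i, e i ∈ S
  ends_eq : ∀ i : Fin n, M.ends (e i) =
    s(w i, w ⟨((i : ℕ) + 1) % n, Nat.mod_lt _ (Nat.lt_of_le_of_lt (Nat.zero_le _) i.isLt)⟩)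

/-- `S` is (the edge set of) a linear forest: every vertex has degree at most 2
and there is no cycle, i.e. the subgraph is a disjoint union of paths. -/
def IsLinearForest (S : Set E) : Prop :=
  (∀ v, M.mdeg S v ≤ 2) ∧ ∀ (n : ℕ) (w : Fin n → V) (e : Fin n → E), ¬ M.IsCycleIn S n w e

/-- `S` is `k`-bounded: it contains no path with more than `k` edges (no
restriction when `k = ∞`). For a linear forest this says every component has at
most `k` edges. -/
def KBounded (S : Set E) (k : ℕ∞) : Prop :=
  ∀ (n : ℕ) (w : Fin (n + 1) → V) (e : Fin n → E), M.IsPathIn S n w e → (n : ℕ∞) ≤ k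

/-- `S` is a matching: every vertex is incident to at most one edge of `S`. -/
def IsMatchingSet (S : Set E) : Prop := ∀ v, M.mdeg S v ≤ 1

/-- `v` is an endpoint of a path of length `k` all of whose edges lie in `S`. -/
def EndsLenPath (S : Set E) (k : ℕ) (v : V) : Prop :=
  ∃ (w : Fin (k + 1) → V) (e : Fin k → E), M.IsPathIn S k w e ∧ w 0 = v

end Multigraph

/-- The path edge `v_i v_{i+1}` is NOT doubled exactly when
`i = k − 1 − μ(ℓ+1)` for some integer `μ ≥ 0`. -/
def Undoubled (k ℓ : ℕ) (i : Fin k) : Prop :=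
  ∃ μ : ℕ, (i : ℕ) + μ * (ℓ + 1) = k - 1

/-- Edge index type of the short `(k,ℓ)`-forcer: the `k` path edges, plus one
extra parallel copy of each doubled edge. -/
def ShortE (k ℓ : ℕ) : Type :=
  Fin k ⊕ {i : Fin k // ¬ Undoubled k ℓ i}

/-- The short `(k,ℓ)`-forcer: a path `v0 v1 … vk` in which the edge `v_i v_{i+1}`
is doubled for every `i ∈ {0,…,k−1}` not of the form `k − 1 − μ(ℓ+1)`. -/
def shortForcer (k ℓ : ℕ) : Multigraph (Fin (k + 1)) (ShortE k ℓ) where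
  ends := Sum.elim (fun i => s(i.castSucc, i.succ))
    (fun j => s(j.1.castSucc, j.1.succ))

namespace ShortAux

open Multigraph

variable {k ℓ : ℕ}

/-- The underlying path position of an edge. -/
def pos : ShortE k ℓ → Fin k := Sum.elim id (·.1)

lemma ends_eq_pos (e : ShortE k ℓ) :
    (shortForcer k ℓ).ends e = s((pos e).castSucc, (pos e).succ) := by
  cases e <;> rfl

/-- Reversing a path. -/
lemma IsPathIn.rev {V E : Type*} {M : Multigraph V E} {S : Set E} {n : ℕ}
    {w : Fin (n + 1) → V} {e : Fin n → E} (h : M.IsPathIn S n w e) :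
    M.IsPathIn S n (fun j => w j.rev) (fun i => e i.rev) := by
  refine ⟨h.winj.comp (fun a b hab => Fin.rev_injective hab),
    h.einj.comp (fun a b hab => Fin.rev_injective hab), fun i => h.mem _, fun i => ?_⟩
  have h1 : (i.rev).castSucc = (i.succ).rev := by
    apply Fin.ext
    simp [Fin.val_rev]
  have h2 : (i.rev).succ = (i.castSucc).rev := by
    apply Fin.ext
    simp [Fin.val_rev]
    omega
  rw [h.ends_eq i.rev, h1, h2, Sym2.eq_swap]

/-- Building an ascending path from a choice of edges at consecutive positions. -/
lemma pathBuild (T : Set (ShortE k ℓ)) (m n : ℕ) (hmn : m + n ≤ k)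
    (f : Fin n → ShortE k ℓ) (hmem : ∀ s, f s ∈ T)
    (hpos : ∀ s : Fin n, (pos (f s) : ℕ) = m + s) :
    (shortForcer k ℓ).IsPathIn T n (fun j => ⟨m + j, by omega⟩) f := by
  refine ⟨fun a b hab => ?_, fun a b hab => ?_, hmem, fun i => ?_⟩
  · simp only [Fin.mk.injEq] at hab
    exact Fin.ext (by omega)
  · have h1 := hpos a
    rw [hab, hpos b] at h1
    exact Fin.ext (by omega)
  · rw [ends_eq_pos]
    have h := hpos i
    have h1 : ((pos (f i)).castSucc : Fin (k+1)) = ⟨m + (i : ℕ), by omega⟩ :=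
      Fin.ext (by simp [h])
    have h2 : ((pos (f i)).succ : Fin (k+1)) = ⟨m + (i : ℕ) + 1, by omega⟩ :=
      Fin.ext (by simp [h])
    rw [h1, h2]
    congr 1 <;> exact Fin.ext (by simp)


end ShortAux
namespace ShortAux

variable {k ℓ : ℕ}

lemma edge_at_max {p : Fin k} {a b : Fin (k + 1)}
    (h : s(p.castSucc, p.succ) = s(a, b)) (hlt : (b : ℕ) < (a : ℕ)) :
    (p : ℕ) + 1 = (a : ℕ) := by
  rw [Sym2.eq_iff] at h
  rcases h with ⟨h1, h2⟩ | ⟨h1, h2⟩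
  · have e1 : ((p.castSucc : Fin (k+1)) : ℕ) = (p : ℕ) := rfl
    have e2 : ((p.succ : Fin (k+1)) : ℕ) = (p : ℕ) + 1 := rfl
    rw [← h1, ← h2, e1, e2] at hlt
    omega
  · rw [← h2]
    rfl

lemma posInj_noCycle (T : Set (ShortE k ℓ)) (hT : Set.InjOn pos T) :
    ∀ n w e, ¬ (shortForcer k ℓ).IsCycleIn T n w e := by
  rintro n w e ⟨hn, winj, einj, hmem, hends⟩
  match n, w, e, winj, einj, hmem, hends with
  | 1, w, e, winj, einj, hmem, hends =>
    have h := hends 0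
    rw [ends_eq_pos] at h
    have h0 : (⟨((0 : Fin 1) : ℕ) + 1 % 1, by omega⟩ : Fin 1) = 0 := by
      apply Fin.ext; simp
    rw [Sym2.eq_iff] at h
    have hc : ((pos (e 0)).castSucc : ℕ) = ((pos (e 0)).succ : ℕ) := by
      rcases h with ⟨h1, h2⟩ | ⟨h1, h2⟩ <;> rw [h1, h2] <;> congr 1 <;>
        apply Fin.ext <;> simp
    simp [Fin.val_succ] at hc
  | (n + 2), w, e, winj, einj, hmem, hends =>
    obtain ⟨m, hm⟩ := Finite.exists_max (fun j : Fin (n + 2) => (w j : ℕ))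
    have hmlt : (m : ℕ) < n + 2 := m.isLt
    have hi2lt : ((m : ℕ) + (n + 1)) % (n + 2) < n + 2 := Nat.mod_lt _ (by omega)
    set i2 : Fin (n + 2) := ⟨((m : ℕ) + (n + 1)) % (n + 2), hi2lt⟩ with hi2
    have hne : i2 ≠ m := by
      intro hcon
      have hv : ((m : ℕ) + (n + 1)) % (n + 2) = (m : ℕ) := congrArg Fin.val hcon
      rcases Nat.lt_or_ge ((m : ℕ) + (n + 1)) (n + 2) with hlt | hge
      · rw [Nat.mod_eq_of_lt hlt] at hv; omega
      · have he : (m : ℕ) + (n + 1) = ((m : ℕ) - 1) + (n + 2) := by omega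
        rw [he, Nat.add_mod_right, Nat.mod_eq_of_lt (by omega)] at hv
        omega
    have hsm : (((m : ℕ) + 1) % (n + 2)) ≠ (m : ℕ) := by
      rcases Nat.lt_or_ge ((m : ℕ) + 1) (n + 2) with hlt | hge
      · rw [Nat.mod_eq_of_lt hlt]; omega
      · have he : (m : ℕ) + 1 = n + 2 := by omega
        rw [he, Nat.mod_self]; omega
    have hsi2 : (((i2 : ℕ) + 1) % (n + 2)) = (m : ℕ) := by
      show ((((m : ℕ) + (n + 1)) % (n + 2) + 1) % (n + 2)) = (m : ℕ)
      rw [Nat.mod_add_mod]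
      have he : (m : ℕ) + (n + 1) + 1 = (m : ℕ) + (n + 2) := by omega
      rw [he, Nat.add_mod_right, Nat.mod_eq_of_lt hmlt]
    have h1 := hends m
    rw [ends_eq_pos] at h1
    have key1 : (pos (e m) : ℕ) + 1 = (w m : ℕ) := by
      apply edge_at_max h1
      have hle := hm ⟨((m : ℕ) + 1) % (n + 2), Nat.mod_lt _ (by omega)⟩
      have hne2 : (w ⟨((m : ℕ) + 1) % (n + 2), Nat.mod_lt _ (by omega)⟩ : ℕ) ≠ (w m : ℕ) := by
        intro hc
        exact hsm (congrArg Fin.val (winj (Fin.ext hc)))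
      omega
    have h2 := hends i2
    rw [ends_eq_pos] at h2
    have hrw : (⟨((i2 : ℕ) + 1) % (n + 2), Nat.mod_lt _ (by omega)⟩ : Fin (n + 2)) = m :=
      Fin.ext hsi2
    rw [hrw, Sym2.eq_swap (a := w i2)] at h2
    have key2 : (pos (e i2) : ℕ) + 1 = (w m : ℕ) := by
      apply edge_at_max h2
      have hle := hm i2
      have hne3 : (w i2 : ℕ) ≠ (w m : ℕ) := fun hc => hne (winj (Fin.ext hc))
      omega
    have heq : e i2 = e m := hT (hmem i2) (hmem m) (Fin.ext (by omega))
    exact hne (einj heq)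

lemma posInj_deg (T : Set (ShortE k ℓ)) (hT : Set.InjOn pos T) (v : Fin (k + 1)) :
    (shortForcer k ℓ).mdeg T v ≤ 2 := by
  classical
  have h2 : (Set.univ : Set Bool).ncard = 2 := by
    rw [Set.ncard_univ]; simp
  rw [Multigraph.mdeg, ← h2]
  apply Set.ncard_le_ncard_of_injOn (fun e => ((pos e : ℕ) + 1 = (v : ℕ) : Bool))
  · intro a _; trivial
  · rintro e1 ⟨he1, hv1⟩ e2 ⟨he2, hv2⟩ hf
    rw [ends_eq_pos, Sym2.mem_iff] at hv1 hv2
    have hv1' : (v : ℕ) = (pos e1 : ℕ) ∨ (v : ℕ) = (pos e1 : ℕ) + 1 := by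
      rcases hv1 with h | h <;> rw [h] <;> simp [Fin.val_succ]
    have hv2' : (v : ℕ) = (pos e2 : ℕ) ∨ (v : ℕ) = (pos e2 : ℕ) + 1 := by
      rcases hv2 with h | h <;> rw [h] <;> simp [Fin.val_succ]
    simp only [decide_eq_decide] at hf
    apply hT he1 he2
    apply Fin.ext
    by_cases hb : (pos e1 : ℕ) + 1 = (v : ℕ)
    · have := hf.mp hb; omega
    · have : ¬ ((pos e2 : ℕ) + 1 = (v : ℕ)) := fun hc => hb (hf.mpr hc)
      omega


end ShortAux
namespace ShortAux

variable {k ℓ : ℕ}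

/-- Two undoubled positions within distance ℓ of each other coincide. -/
lemma undoubled_unique {p q a b : ℕ} (hp : p + a * (ℓ + 1) = k - 1)
    (hq : q + b * (ℓ + 1) = k - 1) (h1 : p ≤ q + ℓ) (h2 : q ≤ p + ℓ) : p = q := by
  rcases Nat.le_total a b with hab | hab
  · obtain ⟨c, rfl⟩ := Nat.exists_eq_add_of_le hab
    have hX : c * (ℓ + 1) = 0 ∨ ℓ + 1 ≤ c * (ℓ + 1) := by
      rcases c with _ | c
      · left; exact Nat.zero_mul _
      · right; exact Nat.le_mul_of_pos_left (ℓ + 1) (Nat.succ_pos c)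
    have he : q + a * (ℓ + 1) + c * (ℓ + 1) = k - 1 := by
      rw [← hq]; ring
    omega
  · obtain ⟨c, rfl⟩ := Nat.exists_eq_add_of_le hab
    have hX : c * (ℓ + 1) = 0 ∨ ℓ + 1 ≤ c * (ℓ + 1) := by
      rcases c with _ | c
      · left; exact Nat.zero_mul _
      · right; exact Nat.le_mul_of_pos_left (ℓ + 1) (Nat.succ_pos c)
    have he : p + b * (ℓ + 1) + c * (ℓ + 1) = k - 1 := by
      rw [← hp]; ring
    omega

/-- Any position interval `[c, c+ℓ] ⊆ [0, k-1]` contains an undoubled position. -/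
lemma exists_undoubled_in_window (c : ℕ) (hc : c ≤ k - 1) (hk : 0 < k) :
    ∃ t ≤ ℓ, ∃ h : c + t < k, Undoubled k ℓ ⟨c + t, h⟩ := by
  refine ⟨(k - 1 - c) % (ℓ + 1), Nat.lt_succ_iff.mp (Nat.mod_lt _ (by omega)), by
      have := Nat.mod_le (k - 1 - c) (ℓ + 1); omega, ?_⟩
  refine ⟨(k - 1 - c) / (ℓ + 1), ?_⟩
  have h1 : (k - 1 - c) % (ℓ + 1) + (ℓ + 1) * ((k - 1 - c) / (ℓ + 1)) = k - 1 - c :=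
    Nat.mod_add_div _ _
  show c + (k - 1 - c) % (ℓ + 1) + (k - 1 - c) / (ℓ + 1) * (ℓ + 1) = k - 1
  rw [Nat.mul_comm ((k - 1 - c) / (ℓ + 1))]
  omega

/-- A pair of parallel edges in `T` forms a 2-cycle. -/
lemma two_cycle (T : Set (ShortE k ℓ)) (j : {i : Fin k // ¬ Undoubled k ℓ i})
    (h1 : Sum.inl j.1 ∈ T) (h2 : Sum.inr j ∈ T) :
    (shortForcer k ℓ).IsCycleIn T 2 ![j.1.castSucc, j.1.succ] ![Sum.inl j.1, Sum.inr j] := by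
  have hne : j.1.castSucc ≠ j.1.succ := by
    intro hc
    have := congrArg Fin.val hc
    simp [Fin.val_succ] at this
  refine ⟨by omega, ?_, ?_, ?_, ?_⟩
  · intro a b hab
    fin_cases a <;> fin_cases b <;> simp_all
  · intro a b hab
    fin_cases a <;> fin_cases b <;> simp_all
  · intro i
    fin_cases i <;> simpa
  · intro i
    fin_cases i
    · rfl
    · show (shortForcer k ℓ).ends (Sum.inr j) = s(j.1.succ, j.1.castSucc)
      rw [Sym2.eq_swap]
      rfl

end ShortAux
namespace ShortAux

open Multigraph

variable {k ℓ : ℕ}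

lemma path_step {T : Set (ShortE k ℓ)} {n : ℕ} {w : Fin (n + 1) → Fin (k + 1)}
    {e : Fin n → ShortE k ℓ} (h : (shortForcer k ℓ).IsPathIn T n w e) (i : Fin n) :
    ((w i.castSucc : ℕ) = (pos (e i) : ℕ) ∧ (w i.succ : ℕ) = (pos (e i) : ℕ) + 1) ∨
    ((w i.castSucc : ℕ) = (pos (e i) : ℕ) + 1 ∧ (w i.succ : ℕ) = (pos (e i) : ℕ)) := by
  have hh := h.ends_eq i
  rw [ends_eq_pos, Sym2.eq_iff] at hh
  rcases hh with ⟨h1, h2⟩ | ⟨h1, h2⟩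
  · left
    have v1 := congrArg Fin.val h1
    have v2 := congrArg Fin.val h2
    simp only [Fin.coe_castSucc, Fin.val_succ] at v1 v2
    omega
  · right
    have v1 := congrArg Fin.val h1
    have v2 := congrArg Fin.val h2
    simp only [Fin.coe_castSucc, Fin.val_succ] at v1 v2
    omega

lemma nat_mono (n : ℕ) (u : ℕ → ℕ)
    (huinj : ∀ t s, t ≤ n → s ≤ n → u t = u s → t = s)
    (hstep : ∀ t, t < n → u (t + 1) = u t + 1 ∨ u t = u (t + 1) + 1) :
    (∀ t, t ≤ n → u t = u 0 + t) ∨ (∀ t, t ≤ n → u t + t = u 0) := by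
  rcases Nat.eq_zero_or_pos n with rfl | hn
  · left
    intro t ht
    have ht0 : t = 0 := by omega
    subst ht0
    omega
  rcases hstep 0 hn with h0 | h0
  · left
    have hasc : ∀ t, t < n → u (t + 1) = u t + 1 := by
      intro t
      induction t with
      | zero => intro _; exact h0
      | succ t ih =>
        intro ht
        rcases hstep (t + 1) ht with h | h
        · exact h
        · exfalso
          have h' := ih (by omega)
          have hnn : u (t + 1 + 1) = u (t + 2) := rfl
          have : u (t + 2) = u t := by omega
          have := huinj (t + 2) t (by omega) (by omega) this
          omega
    intro t
    induction t with
    | zero => intro _; omega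
    | succ t ih =>
      intro ht
      have := hasc t (by omega)
      have := ih (by omega)
      omega
  · right
    have hdesc : ∀ t, t < n → u t = u (t + 1) + 1 := by
      intro t
      induction t with
      | zero => intro _; exact h0
      | succ t ih =>
        intro ht
        rcases hstep (t + 1) ht with h | h
        · exfalso
          have h' := ih (by omega)
          have hnn : u (t + 1 + 1) = u (t + 2) := rfl
          have : u (t + 2) = u t := by omega
          have := huinj (t + 2) t (by omega) (by omega) this
          omega
        · exact h
    intro t
    induction t with
    | zero => intro _; omega
    | succ t ih =>
      intro ht
      have := hdesc t (by omega)
      have := ih (by omega)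
      omega

/-- A path all of whose edges sit at doubled positions has length at most ℓ. -/
lemma len_le_of_all_doubled (hkl : ℓ < k) {T : Set (ShortE k ℓ)} {n : ℕ}
    {w : Fin (n + 1) → Fin (k + 1)} {e : Fin n → ShortE k ℓ}
    (h : (shortForcer k ℓ).IsPathIn T n w e)
    (hd : ∀ i, ¬ Undoubled k ℓ (pos (e i))) : n ≤ ℓ := by
  by_contra hcon
  push_neg at hcon
  have hn : ℓ + 1 ≤ n := hcon
  set u : ℕ → ℕ := fun t => (w ⟨min t n, by omega⟩ : ℕ) with hu
  have hut : ∀ t (ht : t ≤ n), u t = (w ⟨t, by omega⟩ : ℕ) := by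
    intro t ht
    have hmin : min t n = t := Nat.min_eq_left ht
    simp only [hu, hmin]
  have huinj : ∀ t s, t ≤ n → s ≤ n → u t = u s → t = s := by
    intro t s ht hs huts
    rw [hut t ht, hut s hs] at huts
    have h2 := h.winj (Fin.ext huts)
    exact congrArg Fin.val h2
  have hstep0 : ∀ t (ht : t < n),
      (u t = (pos (e ⟨t, ht⟩) : ℕ) ∧ u (t + 1) = (pos (e ⟨t, ht⟩) : ℕ) + 1) ∨
      (u t = (pos (e ⟨t, ht⟩) : ℕ) + 1 ∧ u (t + 1) = (pos (e ⟨t, ht⟩) : ℕ)) := by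
    intro t ht
    have hs := path_step h ⟨t, ht⟩
    have e1 : (⟨t, ht⟩ : Fin n).castSucc = ⟨t, by omega⟩ := rfl
    have e2 : (⟨t, ht⟩ : Fin n).succ = ⟨t + 1, by omega⟩ := rfl
    rw [e1, e2, ← hut t (by omega), ← hut (t + 1) (by omega)] at hs
    exact hs
  have hstep : ∀ t, t < n → u (t + 1) = u t + 1 ∨ u t = u (t + 1) + 1 := by
    intro t ht
    rcases hstep0 t ht with ⟨h1, h2⟩ | ⟨h1, h2⟩
    · left; omega
    · right; omega
  rcases nat_mono n u huinj hstep with hasc | hdesc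
  · -- ascending: pos (e ⟨t⟩) = u 0 + t
    have hpos : ∀ t (ht : t < n), (pos (e ⟨t, ht⟩) : ℕ) = u 0 + t := by
      intro t ht
      have h1 := hasc t (by omega)
      have h2 := hasc (t + 1) (by omega)
      rcases hstep0 t ht with ⟨g1, g2⟩ | ⟨g1, g2⟩ <;> omega
    have hc : u 0 ≤ k - 1 := by
      have := (pos (e ⟨0, by omega⟩)).isLt
      have := hpos 0 (by omega)
      omega
    obtain ⟨t, htℓ, hlt, hund⟩ := exists_undoubled_in_window (k := k) (ℓ := ℓ) (u 0) hc (by omega)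
    have hidx : t < n := by omega
    have : pos (e ⟨t, hidx⟩) = ⟨u 0 + t, hlt⟩ := Fin.ext (by rw [hpos t hidx])
    exact hd ⟨t, hidx⟩ (this ▸ hund)
  · -- descending: pos (e ⟨t⟩) = u 0 - (t + 1)
    have hq : u n + n = u 0 := hdesc n (le_refl n)
    have hpos : ∀ t (ht : t < n), (pos (e ⟨t, ht⟩) : ℕ) + t + 1 = u 0 := by
      intro t ht
      have h1 := hdesc t (by omega)
      have h2 := hdesc (t + 1) (by omega)
      rcases hstep0 t ht with ⟨g1, g2⟩ | ⟨g1, g2⟩ <;> omega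
    have hc : u 0 - n ≤ k - 1 := by
      have := (pos (e ⟨n - 1, by omega⟩)).isLt
      have := hpos (n - 1) (by omega)
      omega
    obtain ⟨t, htℓ, hlt, hund⟩ :=
      exists_undoubled_in_window (k := k) (ℓ := ℓ) (u 0 - n) hc (by omega)
    have hidx : n - 1 - t < n := by omega
    have : pos (e ⟨n - 1 - t, hidx⟩) = ⟨u 0 - n + t, hlt⟩ := by
      apply Fin.ext
      have := hpos (n - 1 - t) hidx
      show (pos (e ⟨n - 1 - t, hidx⟩) : ℕ) = u 0 - n + t
      omega
    exact hd ⟨n - 1 - t, hidx⟩ (this ▸ hund)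

end ShortAux
open ShortAux

/-- for integers `k > ℓ ≥ 2`, in every decomposition of the edge
set of the short `(k,ℓ)`-forcer into a `k`-bounded linear forest `S` and an
`ℓ`-bounded linear forest `Sᶜ`: each parallel pair has one edge in `S` and one
in `Sᶜ`, all undoubled path edges lie in `S`, the tip vertex `v_k` is incident
to no edge of `Sᶜ`, and `v_k` is an endpoint of a path of length `k` in `S`;
moreover such a decomposition exists. -/
theorem stmt8 (k ℓ : ℕ) (hℓ : 2 ≤ ℓ) (hkl : ℓ < k) :
    (∀ S : Set (ShortE k ℓ),
      (shortForcer k ℓ).IsLinearForest S → (shortForcer k ℓ).KBounded S (k : ℕ∞) →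
      (shortForcer k ℓ).IsLinearForest Sᶜ → (shortForcer k ℓ).KBounded Sᶜ (ℓ : ℕ∞) →
      ((∀ j : {i : Fin k // ¬ Undoubled k ℓ i}, Sum.inl j.1 ∈ S ↔ Sum.inr j ∉ S) ∧
       (∀ i : Fin k, Undoubled k ℓ i → Sum.inl i ∈ S) ∧
       (shortForcer k ℓ).mdeg Sᶜ (Fin.last k) = 0 ∧
       (shortForcer k ℓ).EndsLenPath S k (Fin.last k))) ∧
    (∃ S : Set (ShortE k ℓ),
      (shortForcer k ℓ).IsLinearForest S ∧ (shortForcer k ℓ).KBounded S (k : ℕ∞) ∧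
      (shortForcer k ℓ).IsLinearForest Sᶜ ∧ (shortForcer k ℓ).KBounded Sᶜ (ℓ : ℕ∞)) := by
  constructor
  · intro S hS hSk hC hCl
    have hpairS : ∀ j : {i : Fin k // ¬ Undoubled k ℓ i},
        ¬ (Sum.inl j.1 ∈ S ∧ Sum.inr j ∈ S) := by
      rintro j ⟨h1, h2⟩
      exact hS.2 2 _ _ (two_cycle S j h1 h2)
    have hpairC : ∀ j : {i : Fin k // ¬ Undoubled k ℓ i},
        ¬ (Sum.inl j.1 ∈ Sᶜ ∧ Sum.inr j ∈ Sᶜ) := by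
      rintro j ⟨h1, h2⟩
      exact hC.2 2 _ _ (two_cycle Sᶜ j h1 h2)
    have hiff : ∀ j : {i : Fin k // ¬ Undoubled k ℓ i}, Sum.inl j.1 ∈ S ↔ Sum.inr j ∉ S := by
      intro j
      constructor
      · intro h1 h2
        exact hpairS j ⟨h1, h2⟩
      · intro h2
        by_contra h1
        exact hpairC j ⟨h1, h2⟩
    have hselC : ∀ p : Fin k, ¬ Undoubled k ℓ p → ∃ e ∈ Sᶜ, pos e = p := by
      intro p hp
      by_cases h : Sum.inl p ∈ S
      · exact ⟨Sum.inr ⟨p, hp⟩, (hiff ⟨p, hp⟩).mp h, rfl⟩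
      · exact ⟨Sum.inl p, h, rfl⟩
    have hb : ∀ i : Fin k, Undoubled k ℓ i → Sum.inl i ∈ S := by
      intro i hu
      by_contra hin
      obtain ⟨μ, hμ⟩ := hu
      have hik : (i : ℕ) < k := i.isLt
      set m : ℕ := min (i : ℕ) (k - 1 - ℓ) with hm
      have hwin : m + (ℓ + 1) ≤ k := by omega
      have him : m ≤ (i : ℕ) ∧ (i : ℕ) ≤ m + ℓ := by
        rcases Nat.le_total (i : ℕ) (k - 1 - ℓ) with h | h <;> constructor <;> omega
      have hsel : ∀ s : Fin (ℓ + 1), ∃ e ∈ Sᶜ, (pos e : ℕ) = m + s := by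
        intro s
        have hsl : (s : ℕ) ≤ ℓ := by omega
        have hms : m + (s : ℕ) < k := by omega
        by_cases hq : m + (s : ℕ) = (i : ℕ)
        · refine ⟨Sum.inl i, hin, ?_⟩
          show ((i : Fin k) : ℕ) = m + (s : ℕ)
          omega
        · have hnd : ¬ Undoubled k ℓ (⟨m + s, hms⟩ : Fin k) := by
            rintro ⟨ν, hν⟩
            exact hq (undoubled_unique hν hμ (by omega) (by omega))
          obtain ⟨e, he, hpe⟩ := hselC ⟨m + s, hms⟩ hnd
          exact ⟨e, he, by rw [hpe]⟩
      choose f hfmem hfpos using hsel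
      have hpath := pathBuild Sᶜ m (ℓ + 1) hwin f hfmem hfpos
      have hle := hCl (ℓ + 1) _ _ hpath
      rw [Nat.cast_le] at hle
      omega
    have hc : (shortForcer k ℓ).mdeg Sᶜ (Fin.last k) = 0 := by
      have hempty : {e ∈ Sᶜ | Fin.last k ∈ (shortForcer k ℓ).ends e} = ∅ := by
        ext e
        simp only [Set.mem_setOf_eq, Set.mem_empty_iff_false, iff_false, not_and]
        intro heC hmem
        rw [ends_eq_pos, Sym2.mem_iff] at hmem
        have hlt : (pos e : ℕ) < k := (pos e).isLt
        have hpe : (pos e : ℕ) = k - 1 := by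
          rcases hmem with h | h
          · have hv := congrArg Fin.val h
            simp only [Fin.val_last, Fin.coe_castSucc] at hv
            omega
          · have hv := congrArg Fin.val h
            simp only [Fin.val_last, Fin.val_succ] at hv
            omega
        rcases e with i | j
        · have hpi : (pos (Sum.inl i : ShortE k ℓ) : ℕ) = (i : ℕ) := rfl
          exact heC (hb i ⟨0, by omega⟩)
        · exact j.2 ⟨0, by
            have : (j.1 : ℕ) = k - 1 := hpe
            omega⟩
      show ({e ∈ Sᶜ | Fin.last k ∈ (shortForcer k ℓ).ends e}).ncard = 0
      rw [hempty, Set.ncard_empty]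
    have hselS : ∀ p : Fin k, ∃ e ∈ S, pos e = p := by
      intro p
      by_cases hu : Undoubled k ℓ p
      · exact ⟨Sum.inl p, hb p hu, rfl⟩
      · by_cases h : Sum.inl p ∈ S
        · exact ⟨Sum.inl p, h, rfl⟩
        · refine ⟨Sum.inr ⟨p, hu⟩, ?_, rfl⟩
          by_contra h2
          exact h ((hiff ⟨p, hu⟩).mpr h2)
    have hsel' : ∀ s : Fin k, ∃ e ∈ S, (pos e : ℕ) = 0 + (s : ℕ) := by
      intro s
      obtain ⟨e, he, hpe⟩ := hselS s
      exact ⟨e, he, by rw [hpe]; omega⟩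
    choose f hfmem hfpos using hsel'
    have hpath := pathBuild S 0 k (by omega) f hfmem hfpos
    have hrev := ShortAux.IsPathIn.rev hpath
    refine ⟨hiff, hb, hc, ?_⟩
    refine ⟨_, _, hrev, ?_⟩
    apply Fin.ext
    show 0 + (((0 : Fin (k + 1)).rev : ℕ)) = k
    have h0 : ((0 : Fin (k + 1)) : ℕ) = 0 := rfl
    rw [Fin.val_rev, h0]
    omega
  · set S : Set (ShortE k ℓ) := {e : ShortE k ℓ | e.isLeft} with hSdef
    have hPosS : Set.InjOn pos S := by
      rintro (a | a) ha (b | b) hb hp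
      · exact congrArg Sum.inl hp
      · exact absurd (hb : (false : Bool) = true) Bool.false_ne_true
      · exact absurd (ha : (false : Bool) = true) Bool.false_ne_true
      · exact absurd (ha : (false : Bool) = true) Bool.false_ne_true
    have hmemC : ∀ e, e ∈ Sᶜ ↔ ∃ j, e = Sum.inr j := by
      rintro (a | a)
      · exact ⟨fun h => ((h : ¬ ((true : Bool) = true)) rfl).elim,
          fun ⟨j, hj⟩ => absurd hj (by intro hc; cases hc)⟩
      · exact ⟨fun _ => ⟨a, rfl⟩, fun _ => (Bool.false_ne_true : ¬ ((false : Bool) = true))⟩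
    have hPosC : Set.InjOn pos Sᶜ := by
      intro a ha b hb hp
      obtain ⟨ja, rfl⟩ := (hmemC a).mp ha
      obtain ⟨jb, rfl⟩ := (hmemC b).mp hb
      have : ja.1 = jb.1 := hp
      exact congrArg Sum.inr (Subtype.ext this)
    refine ⟨S, ⟨fun v => posInj_deg _ hPosS v, posInj_noCycle _ hPosS⟩, ?_,
      ⟨fun v => posInj_deg _ hPosC v, posInj_noCycle _ hPosC⟩, ?_⟩
    · -- S is k-bounded
      intro n w e hp
      have hinj : Function.Injective (fun i => pos (e i)) := by
        intro a b hab
        exact hp.einj (hPosS (hp.mem a) (hp.mem b) hab)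
      have hcard : n ≤ k := by
        have := Fintype.card_le_of_injective _ hinj
        simpa using this
      exact Nat.cast_le.mpr hcard
    · -- Sᶜ is ℓ-bounded
      intro n w e hp
      have hd : ∀ i, ¬ Undoubled k ℓ (pos (e i)) := by
        intro i
        obtain ⟨j, hj⟩ := (hmemC (e i)).mp (hp.mem i)
        rw [hj]
        exact j.2
      exact Nat.cast_le.mpr (len_le_of_all_doubled hkl hp hd)
end

section
/- Let G be a connected planar graph with an embedding in which every face has boundary-walk length at least 9, and such that every face whose boundary walk contains a vertex repeated or has at least 11 edges contributes at least 6 occurrences of vertices of degree ≥ 3. If additionally every vertex of G has degree 2 or 3, every face of length 9 or 10 is incident to at least six vertices of degree 3, and on every boundary walk no two consecutive vertices both have degree 2, then assigning charge |f| − 6 to each face f and 2·deg(v) − 6 to each vertex v, and having each face send charge 1 to each occurrence of a degree-2 vertex on its boundary walk, results in every face and every vertex having non-negative final charge. -/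
/-- the discharging computation. The embedding of the connected
planar graph `G` is encoded by its faces: a finite index type `ι`, the length
`len f` of the boundary walk of each face `f`, and the boundary walk itself
`bwalk f : Fin (len f) → V` (read cyclically). The standard embedding fact that
each vertex occurs exactly `deg v` times in total among the boundary walks is
recorded as `hocc`. Under the stated hypotheses — every face has length at
least 9; every face with a repeated boundary vertex or of length at least 11
has at least 6 boundary occurrences of vertices of degree ≥ 3; every vertex has
degree 2 or 3; every face of length 9 or 10 is incident to at least six
degree-3 vertices; and no two cyclically consecutive boundary vertices both
have degree 2 — assigning charge `|f| − 6` to each face and `2·deg v − 6` to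
each vertex, and letting each face send charge 1 to each occurrence of a
degree-2 vertex on its boundary walk, every face and every vertex ends with
non-negative charge. -/
theorem stmt14 {V : Type*} [Fintype V] [DecidableEq V] (G : SimpleGraph V)
    [DecidableRel G.Adj] (hconn : G.Connected)
    {ι : Type*} [Fintype ι]
    (len : ι → ℕ) (bwalk : (f : ι) → Fin (len f) → V)
    (hlen : ∀ f, 9 ≤ len f)
    (hdeg : ∀ v, G.degree v = 2 ∨ G.degree v = 3)
    (hocc : ∀ v : V,
      (∑ f : ι, (Finset.univ.filter (fun i : Fin (len f) => bwalk f i = v)).card)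
        = G.degree v)
    (hbig : ∀ f : ι, (¬ Function.Injective (bwalk f) ∨ 11 ≤ len f) →
      6 ≤ (Finset.univ.filter (fun i : Fin (len f) => 3 ≤ G.degree (bwalk f i))).card)
    (h910 : ∀ f : ι, (len f = 9 ∨ len f = 10) →
      6 ≤ (Finset.univ.filter
        (fun v : V => (∃ i, bwalk f i = v) ∧ G.degree v = 3)).card)
    (hnoconsec : ∀ (f : ι) (i j : Fin (len f)),
      (j : ℕ) = ((i : ℕ) + 1) % len f →
      ¬ (G.degree (bwalk f i) = 2 ∧ G.degree (bwalk f j) = 2)) :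
    (∀ f : ι, (0 : ℤ) ≤ (len f : ℤ) - 6 -
      ((Finset.univ.filter (fun i : Fin (len f) => G.degree (bwalk f i) = 2)).card : ℤ)) ∧
    (∀ v : V, (0 : ℤ) ≤ 2 * (G.degree v : ℤ) - 6 +
      (if G.degree v = 2 then
        ((∑ f : ι, (Finset.univ.filter (fun i : Fin (len f) => bwalk f i = v)).card : ℕ) : ℤ)
       else 0)) := by
  constructor
  · intro f
    set S2 := Finset.univ.filter (fun i : Fin (len f) => G.degree (bwalk f i) = 2) with hS2
    set S3 := Finset.univ.filter (fun i : Fin (len f) => 3 ≤ G.degree (bwalk f i)) with hS3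
    have hsum : S2.card + S3.card = len f := by
      have hdisj : Disjoint S2 S3 := by
        rw [Finset.disjoint_left]
        intro i hi hi'
        simp only [hS2, Finset.mem_filter, Finset.mem_univ, true_and] at hi
        simp only [hS3, Finset.mem_filter, Finset.mem_univ, true_and] at hi'
        omega
      have huniv : S2 ∪ S3 = Finset.univ := by
        ext i
        simp only [Finset.mem_union, hS2, hS3, Finset.mem_filter, Finset.mem_univ, true_and,
          iff_true]
        rcases hdeg (bwalk f i) with h | h <;> omega
      have := Finset.card_union_of_disjoint hdisj
      rw [huniv, Finset.card_univ, Fintype.card_fin] at this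
      omega
    have h6 : 6 ≤ S3.card := by
      by_cases hb : ¬ Function.Injective (bwalk f) ∨ 11 ≤ len f
      · exact hbig f hb
      · push_neg at hb
        obtain ⟨hinj, hlt⟩ := hb
        have h910' := h910 f (by have := hlen f; omega)
        have hle : (Finset.univ.filter
            (fun v : V => (∃ i, bwalk f i = v) ∧ G.degree v = 3)).card ≤ S3.card := by
          apply Finset.card_le_card_of_injOn
            (fun v => if h : ∃ i, bwalk f i = v then h.choose else ⟨0, by have := hlen f; omega⟩)
          · intro v hv
            rw [Finset.mem_coe, Finset.mem_filter] at hv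
            obtain ⟨_, he, hd⟩ := hv
            simp only [he, dif_pos]
            simp only [hS3, Finset.mem_coe, Finset.mem_filter, Finset.mem_univ, true_and]
            rw [he.choose_spec, hd]
          · intro v hv w hw hvw
            rw [Finset.coe_filter] at hv hw
            obtain ⟨_, hev, _⟩ := hv
            obtain ⟨_, hew, _⟩ := hw
            simp only [hev, hew, dif_pos] at hvw
            rw [← hev.choose_spec, ← hew.choose_spec, hvw]
        omega
    have h1 : (S2.card : ℤ) + S3.card = (len f : ℤ) := by exact_mod_cast hsum
    have h2 : (6 : ℤ) ≤ S3.card := by exact_mod_cast h6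
    omega
  · intro v
    rcases hdeg v with h | h
    · rw [h, if_pos rfl, hocc v, h]
      norm_num
    · rw [h, if_neg (by omega)]
      norm_num
end
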